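/- Fix ε > 0. For [x, x̄, v, v̄] with v ≠ v̄, |x - x̄| > ε, and D(X,V) := -(x̄ - x)·ŵ - √(|(x̄ - x)·ŵ|² + ε² - |x̄ - x|²) well-defined (discriminant nonnegative), define τ(X, V) := D(X,V)/|v̄ - v| where w = v̄ - v. Then the directional derivative of τ in the X = [x, x̄] variable along V = [v, v̄] equals -1, i.e. (V·∇_X) τ(X, V) = -1. -/

import Mathlib

open scoped RealInnerProductSpace

noncomputable abbrev E3 := EuclideanSpace ℝ (Fin 3)

/-!
The collision time depends on `X = (x, x̄)` only through `y = x̄ - x`, and moving `X` along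
`V = (v, v̄)` moves `y` along `w = v̄ - v`. Along that line the discriminant
`(y·ŵ)² + ε² - |y|²` is constant, while `-y·ŵ` drops at rate `|w|`; hence
`τ(X + tV, V) = τ(X, V) - t` for every `t`, and the derivative along `V` is `-1`.
-/

theorem fderiv_apply_eq_of_add_smul_eq {𝕜 E F : Type*} [NontriviallyNormedField 𝕜]
    [NormedAddCommGroup E] [NormedSpace 𝕜 E] [NormedAddCommGroup F] [NormedSpace 𝕜 F]
    {f : E → F} {x v : E} {c : F} (hf : DifferentiableAt 𝕜 f x)
    (hline : ∀ t : 𝕜, f (x + t • v) = f x + t • c) :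
    fderiv 𝕜 f x v = c := by
  rw [← hf.lineDeriv_eq_fderiv, lineDeriv]
  simp_rw [hline, deriv_const_add]
  simpa using ((hasDerivAt_id (0 : 𝕜)).smul_const c).deriv

namespace CollisionTime

variable {E : Type*} [NormedAddCommGroup E] [InnerProductSpace ℝ E]

/-- A quarter of the discriminant of the quadratic `|y + s ŵ|² = ε²` in `s`, with `ŵ = w / |w|`. -/
noncomputable def disc (ε : ℝ) (w y : E) : ℝ :=
  ⟪y, ‖w‖⁻¹ • w⟫ ^ 2 + ε ^ 2 - ‖y‖ ^ 2

/-- The collision time of two spheres of diameter `ε` with relative position `y = x̄ - x` and relative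
velocity `w = v̄ - v`. -/
noncomputable def time (ε : ℝ) (w y : E) : ℝ :=
  (-⟪y, ‖w‖⁻¹ • w⟫ - Real.sqrt (disc ε w y)) / ‖w‖

variable (ε : ℝ) {w : E}

theorem inner_add_smul_normalized (hw : w ≠ 0) (y : E) (t : ℝ) :
    ⟪y + t • w, ‖w‖⁻¹ • w⟫ = ⟪y, ‖w‖⁻¹ • w⟫ + t * ‖w‖ := by
  have : ‖w‖ ≠ 0 := norm_ne_zero_iff.mpr hw
  rw [inner_add_left, real_inner_smul_left, real_inner_smul_right w, real_inner_self_eq_norm_sq]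
  field_simp

theorem disc_add_smul (y : E) (t : ℝ) : disc ε w (y + t • w) = disc ε w y := by
  rcases eq_or_ne w 0 with rfl | hw
  · simp
  have : ‖w‖ ≠ 0 := norm_ne_zero_iff.mpr hw
  rw [disc, disc, inner_add_smul_normalized hw, norm_add_sq_real, norm_smul,
    Real.norm_eq_abs, mul_pow, sq_abs]
  simp only [real_inner_smul_right]
  field_simp
  ring

theorem time_add_smul (hw : w ≠ 0) (y : E) (t : ℝ) :
    time ε w (y + t • w) = time ε w y - t := by
  have : ‖w‖ ≠ 0 := norm_ne_zero_iff.mpr hw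
  rw [time, time, disc_add_smul, inner_add_smul_normalized hw]
  field_simp
  ring

theorem differentiableAt_time {y : E} (hy : disc ε w y ≠ 0) :
    DifferentiableAt ℝ (time ε w) y := by
  have hinner : DifferentiableAt ℝ (fun y : E ↦ ⟪y, ‖w‖⁻¹ • w⟫) y :=
    differentiableAt_id.inner ℝ (differentiableAt_const _)
  have hdisc : DifferentiableAt ℝ (disc ε w) y :=
    ((hinner.pow 2).add_const _).sub (differentiableAt_id.norm_sq ℝ)
  unfold time
  fun_prop (disch := exact hy)

end CollisionTime

theorem stmt3_general (ε : ℝ) (x xb v vb : E3) (hv : v ≠ vb)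
    (hdisc : 0 < ⟪xb - x, ‖vb - v‖⁻¹ • (vb - v)⟫ ^ 2 + ε ^ 2 - ‖xb - x‖ ^ 2) :
    fderiv ℝ (fun p : E3 × E3 =>
      (-(⟪p.2 - p.1, ‖vb - v‖⁻¹ • (vb - v)⟫) -
        Real.sqrt (⟪p.2 - p.1, ‖vb - v‖⁻¹ • (vb - v)⟫ ^ 2 + ε ^ 2 - ‖p.2 - p.1‖ ^ 2))
        / ‖vb - v‖) (x, xb) (v, vb) = -1 := by
  change fderiv ℝ (fun p : E3 × E3 ↦ CollisionTime.time ε (vb - v) (p.2 - p.1)) (x, xb) (v, vb)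
    = -1
  have hw : vb - v ≠ 0 := sub_ne_zero.mpr hv.symm
  have hdiff : DifferentiableAt ℝ
      (fun p : E3 × E3 ↦ CollisionTime.time ε (vb - v) (p.2 - p.1)) (x, xb) :=
    (CollisionTime.differentiableAt_time ε hdisc.ne').comp (x, xb)
      (f := fun p : E3 × E3 ↦ p.2 - p.1) (differentiableAt_snd.sub differentiableAt_fst)
  refine fderiv_apply_eq_of_add_smul_eq hdiff fun t ↦ ?_
  have hrel : (xb + t • vb) - (x + t • v) = (xb - x) + t • (vb - v) := by
    rw [smul_sub]; abel
  rw [Prod.fst_add, Prod.snd_add, Prod.smul_fst, Prod.smul_snd, hrel,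
    CollisionTime.time_add_smul ε hw, smul_eq_mul, mul_neg_one, sub_eq_add_neg]

/-- Transport identity (ID-I): the directional derivative of the collision time map
`τ` in the position variable `X = (x, x̄)` along the velocity `V = (v, v̄)` equals `-1`. -/
theorem stmt3 (ε : ℝ) (hε : 0 < ε) (x xb v vb : E3) (hv : v ≠ vb)
    (hx : ε < ‖x - xb‖)
    (hdisc : 0 < ⟪xb - x, ‖vb - v‖⁻¹ • (vb - v)⟫ ^ 2 + ε ^ 2 - ‖xb - x‖ ^ 2) :
    fderiv ℝ (fun p : E3 × E3 =>
      (-(⟪p.2 - p.1, ‖vb - v‖⁻¹ • (vb - v)⟫) -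
        Real.sqrt (⟪p.2 - p.1, ‖vb - v‖⁻¹ • (vb - v)⟫ ^ 2 + ε ^ 2 - ‖p.2 - p.1‖ ^ 2))
        / ‖vb - v‖) (x, xb) (v, vb) = -1 :=
  stmt3_general ε x xb v vb hv hdisc
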